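/- arXiv:1211.4147 — 2 statements merged into one kernel-verified Lean document; each statement's English description precedes it below -/
import Mathlib

section
/- For a fixed-point-free involution x ∈ S_{2n} and each index i, the diagonal rank-control entries satisfy r_{i+1,i+1} - r_{i,i} ∈ {0, 2}, where r_{k,k} is the rank of the upper-left k×k submatrix of the permutation matrix of x. -/
/-- The rank of the upper-left `k × k` submatrix of the permutation matrix of `x`
(realized as the rank of the full matrix with all entries outside the upper-left
`k × k` corner replaced by `0`). -/
noncomputable def rkDiag {m : ℕ} (x : Equiv.Perm (Fin m)) (k : ℕ) : ℕ :=
  (Matrix.of fun p q : Fin m =>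
    if (p : ℕ) < k ∧ (q : ℕ) < k ∧ x p = q then (1 : ℚ) else 0).rank

lemma rkDiag_eq_card {m : ℕ} (x : Equiv.Perm (Fin m)) (k : ℕ) :
    rkDiag x k = (Finset.univ.filter (fun p : Fin m => (p : ℕ) < k ∧ ((x p : ℕ) < k))).card := by
  classical
  set M : Matrix (Fin m) (Fin m) ℚ := Matrix.of fun p q : Fin m =>
    if (p : ℕ) < k ∧ (q : ℕ) < k ∧ x p = q then (1 : ℚ) else 0 with hM
  set w : Fin m → ℚ := fun p => if (p : ℕ) < k ∧ ((x p : ℕ) < k) then 1 else 0 with hw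
  have hD : M * M.transpose = Matrix.diagonal w := by
    ext p q
    rw [Matrix.mul_apply, Finset.sum_eq_single (x p)]
    · by_cases hpq : p = q
      · subst hpq
        simp only [hM, hw, Matrix.of_apply, Matrix.transpose_apply, Matrix.diagonal_apply_eq]
        split_ifs <;> simp_all
      · have hne : x q ≠ x p := fun h => hpq (x.injective h).symm
        simp only [hM, hw, Matrix.of_apply, Matrix.transpose_apply,
          Matrix.diagonal_apply_ne _ hpq]
        split_ifs <;> simp_all
    · intro r _ hr
      simp only [hM, Matrix.of_apply, Matrix.transpose_apply]
      rw [if_neg (by tauto)]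
      simp
    · simp
  have hDM : Matrix.diagonal w * M = M := by
    ext p q
    rw [Matrix.diagonal_mul]
    simp only [hM, hw, Matrix.of_apply]
    split_ifs with h1 h2 h2 <;> simp_all
  have h1 : (Matrix.diagonal w).rank ≤ M.rank := by
    rw [← hD]; exact Matrix.rank_mul_le_left M M.transpose
  have h2 : M.rank ≤ (Matrix.diagonal w).rank := by
    conv_lhs => rw [← hDM]
    exact Matrix.rank_mul_le_left _ M
  have : rkDiag x k = (Matrix.diagonal w).rank := le_antisymm h2 h1
  rw [this, Matrix.rank_diagonal, Fintype.card_subtype]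
  congr 1
  ext p
  simp only [hw, Finset.mem_filter, Finset.mem_univ, true_and]
  split_ifs <;> simp_all

/-- For a fixed-point-free involution `x ∈ S_{2n}` the consecutive diagonal entries of the
rank-control matrix differ by `0` or `2`. -/
theorem rank_control_diagonal_steps (n : ℕ) (x : Equiv.Perm (Fin (2 * n)))
    (hinv : x * x = 1) (hfpf : ∀ i, x i ≠ i) :
    ∀ i < 2 * n, rkDiag x (i + 1) = rkDiag x i ∨ rkDiag x (i + 1) = rkDiag x i + 2 := by
  classical
  intro i hi
  have hxx : ∀ p, x (x p) = p := fun p => by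
    have := congrArg (fun e : Equiv.Perm (Fin (2 * n)) => e p) hinv
    simpa using this
  set S : ℕ → Finset (Fin (2 * n)) := fun k =>
    Finset.univ.filter (fun p => (p : ℕ) < k ∧ ((x p : ℕ) < k)) with hS
  have hcard : ∀ k, rkDiag x k = (S k).card := fun k => rkDiag_eq_card x k
  set pii : Fin (2 * n) := ⟨i, hi⟩ with hpii
  set a : Fin (2 * n) := x pii with ha
  have hxa : x a = pii := hxx pii
  have hai : (a : ℕ) ≠ i := fun h => hfpf pii (Fin.ext h)
  rcases lt_or_gt_of_ne hai with hlt | hgt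
  · -- a < i : rank goes up by 2
    right
    have hset : S (i + 1) = insert pii (insert a (S i)) := by
      ext p
      simp only [hS, Finset.mem_filter, Finset.mem_univ, true_and, Finset.mem_insert]
      constructor
      · rintro ⟨hp, hxp⟩
        by_cases h1 : (p : ℕ) = i
        · left; exact Fin.ext h1
        by_cases h2 : ((x p : ℕ)) = i
        · right; left
          have hxpi : x p = pii := Fin.ext h2
          have := congrArg x hxpi
          rw [hxx] at this
          rw [this, ← ha]
        · right; right; exact ⟨by omega, by omega⟩
      · rintro (rfl | rfl | ⟨h1, h2⟩)
        · refine ⟨by simp [hpii], ?_⟩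
          rw [← ha]; omega
        · rw [hxa]; refine ⟨by omega, by simp [hpii]⟩
        · exact ⟨by omega, by omega⟩
    have hpiS : pii ∉ insert a (S i) := by
      simp only [Finset.mem_insert, hS, Finset.mem_filter, Finset.mem_univ, true_and]
      push_neg
      exact ⟨fun h => hai (by rw [← h]), fun h => absurd h (by simp [hpii])⟩
    have haS : a ∉ S i := by
      simp only [hS, Finset.mem_filter, Finset.mem_univ, true_and]
      rw [hxa]
      simp [hpii]
    rw [hcard, hcard, hset, Finset.card_insert_of_notMem hpiS,
      Finset.card_insert_of_notMem haS]
  · -- a > i : rank stays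
    left
    have hset : S (i + 1) = S i := by
      ext p
      simp only [hS, Finset.mem_filter, Finset.mem_univ, true_and]
      constructor
      · rintro ⟨hp, hxp⟩
        have h1 : (p : ℕ) ≠ i := by
          intro h
          have : p = pii := Fin.ext h
          rw [this, ← ha] at hxp
          omega
        have h2 : ((x p : ℕ)) ≠ i := by
          intro h
          have hxpi : x p = pii := Fin.ext h
          have := congrArg x hxpi
          rw [hxx] at this
          rw [this, ← ha] at hp
          omega
        exact ⟨by omega, by omega⟩
      · rintro ⟨h1, h2⟩; exact ⟨by omega, by omega⟩
    rw [hcard, hcard, hset]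
end

section
/- Let x = [a_1,b_1]···[a_n,b_n] be a fixed-point-free involution in S_{2n} (with a_1 < ··· < a_n, a_t < b_t = x(a_t)), and suppose y is obtained from x by a type 2 interchange: there exist i < j with a_i < a_j < b_i < b_j, and y = [a_1,b_1]···[a_i,b_j]···[a_j,b_i]···[a_n,b_n] (swap b_i and b_j). Then x < y in the Bruhat order on S_{2n}. -/
/-- The number of inversions of a permutation. -/
def invCount {m : ℕ} (x : Equiv.Perm (Fin m)) : ℕ :=
  ((Finset.univ : Finset (Fin m × Fin m)).filter fun p => p.1 < p.2 ∧ x p.2 < x p.1).card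

/-- The Bruhat order on `S_m`: the reflexive-transitive closure of the relation of
multiplying by a transposition while increasing the number of inversions. -/
def bruhatLE {m : ℕ} (x y : Equiv.Perm (Fin m)) : Prop :=
  Relation.ReflTransGen
    (fun u v => (∃ a b : Fin m, a ≠ b ∧ v = u * Equiv.swap a b) ∧ invCount u < invCount v) x y

lemma invCount_lt_mul_swap {m : ℕ} (u : Equiv.Perm (Fin m)) (a b : Fin m)
    (hab : a < b) (hu : u a < u b) :
    invCount u < invCount (u * Equiv.swap a b) := by
  classical
  set v := u * Equiv.swap a b with hv
  have hva : v a = u b := by simp [hv, Equiv.Perm.mul_apply]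
  have hvb : v b = u a := by simp [hv, Equiv.Perm.mul_apply]
  have hvk : ∀ k, k ≠ a → k ≠ b → v k = u k := by
    intro k hk1 hk2
    simp [hv, Equiv.Perm.mul_apply, Equiv.swap_apply_of_ne_of_ne hk1 hk2]
  set s := (Finset.univ : Finset (Fin m × Fin m)).filter
      (fun p => p.1 < p.2 ∧ u p.2 < u p.1) with hs
  set t := (Finset.univ : Finset (Fin m × Fin m)).filter
      (fun p => p.1 < p.2 ∧ v p.2 < v p.1) with ht
  have habne : a ≠ b := hab.ne
  have hmem_t : ∀ r : Fin m × Fin m, r ∈ t ↔ r.1 < r.2 ∧ v r.2 < v r.1 := by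
    intro r; simp [ht]
  have hab_t : (a, b) ∈ t := by
    rw [hmem_t]; exact ⟨hab, by rw [hva, hvb]; exact hu⟩
  set f : Fin m × Fin m → Fin m × Fin m := fun r =>
    if r.2 = a then (if u b < u r.1 then (r.1, a) else (r.1, b))
    else if r.1 = b then (if u r.2 < u a then (b, r.2) else (a, r.2))
    else r with hf
  have hmaps : ∀ r ∈ s, f r ∈ t.erase (a, b) := by
    rintro ⟨i, j⟩ hr
    rw [hs, Finset.mem_filter] at hr
    obtain ⟨-, hij, huji⟩ := hr
    simp only at hij huji
    rw [Finset.mem_erase, hmem_t]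
    simp only [hf]
    split_ifs with c1 c2 c3 c4
    · -- j = a, u b < u i : image (i, a)
      have hila : i < a := c1 ▸ hij
      have hia : i ≠ a := hila.ne
      have hib : i ≠ b := (hila.trans hab).ne
      refine ⟨by simp [habne], hila, ?_⟩
      rw [hva, hvk i hia hib]; exact c2
    · -- j = a, ¬ u b < u i : image (i, b)
      have hila : i < a := c1 ▸ hij
      have hia : i ≠ a := hila.ne
      have hib : i ≠ b := (hila.trans hab).ne
      refine ⟨by simp [hia], hila.trans hab, ?_⟩
      rw [hvb, hvk i hia hib, ← c1]; exact huji
    · -- i = b, u j < u a : image (b, j)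
      have hbj : b < j := c3 ▸ hij
      have hja : j ≠ a := c1
      have hjb : j ≠ b := hbj.ne'
      refine ⟨by simp [hjb], hbj, ?_⟩
      rw [hvb, hvk j hja hjb]; exact c4
    · -- i = b, ¬ u j < u a : image (a, j)
      have hbj : b < j := c3 ▸ hij
      have hja : j ≠ a := c1
      have hjb : j ≠ b := hbj.ne'
      refine ⟨by simp [hjb], hab.trans hbj, ?_⟩
      rw [hva, hvk j hja hjb, ← c3]; exact huji
    · -- identity case : j ≠ a, i ≠ b
      by_cases hia : i = a
      · subst hia
        have hjb : j ≠ b := by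
          intro h; subst h; exact absurd huji (not_lt.mpr hu.le)
        refine ⟨by simp [hjb], hij, ?_⟩
        rw [hva, hvk j c1 hjb]
        exact huji.trans hu
      · by_cases hjb : j = b
        · subst hjb
          refine ⟨by simp [hia], hij, ?_⟩
          rw [hvb, hvk i hia c3]
          exact hu.trans huji
        · refine ⟨?_, hij, ?_⟩
          · intro h
            rw [Prod.mk.injEq] at h
            exact hia h.1
          · rw [hvk j c1 hjb, hvk i hia c3]; exact huji
  have hinj : Set.InjOn f ↑s := by
    rintro ⟨i1, j1⟩ hr1 ⟨i2, j2⟩ hr2 heq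
    rw [Finset.mem_coe, hs, Finset.mem_filter] at hr1 hr2
    obtain ⟨-, hij1, hu1⟩ := hr1
    obtain ⟨-, hij2, hu2⟩ := hr2
    simp only at hij1 hu1 hij2 hu2
    simp only [hf] at heq
    split_ifs at heq <;>
      (try subst_vars) <;>
      injection heq with e1 e2 <;>
      subst_vars <;>
      first
        | rfl
        | (exfalso; simp only [Fin.lt_def, not_lt, Fin.ext_iff] at *; omega)
  calc invCount u = s.card := rfl
    _ ≤ (t.erase (a, b)).card := Finset.card_le_card_of_injOn f hmaps hinj
    _ < t.card := Finset.card_erase_lt_of_mem hab_t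
    _ = invCount v := rfl

/-- A type 2 interchange: if `x` is a fixed-point-free involution with arcs
`(p, x p)` and `(q, x q)` satisfying `p < q < x p < x q` (i.e. `aᵢ < aⱼ < bᵢ < bⱼ`),
and `y` is obtained from `x` by swapping the arc endpoints `bᵢ = x p` and `bⱼ = x q`,
then `x < y` in the Bruhat order on `S_{2n}`. -/
theorem type2_interchange_lt (n : ℕ) (x y : Equiv.Perm (Fin (2 * n)))
    (hinv : x * x = 1) (hfpf : ∀ i, x i ≠ i)
    (p q : Fin (2 * n)) (h1 : p < q) (h2 : q < x p) (h3 : x p < x q)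
    (hy1 : y p = x q) (hy2 : y (x q) = p) (hy3 : y q = x p) (hy4 : y (x p) = q)
    (hy5 : ∀ k, k ≠ p → k ≠ q → k ≠ x p → k ≠ x q → y k = x k) :
    bruhatLE x y ∧ x ≠ y := by
  have hxx : ∀ k, x (x k) = k := by
    intro k
    have := DFunLike.congr_fun hinv k
    simpa [Equiv.Perm.mul_apply] using this
  -- distinctness facts
  have hpq : p ≠ q := h1.ne
  have hpxp : p ≠ x p := (h1.trans h2).ne
  have hpxq : p ≠ x q := ((h1.trans h2).trans h3).ne
  have hqxp : q ≠ x p := h2.ne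
  have hqxq : q ≠ x q := (h2.trans h3).ne
  have hxpxq : x p ≠ x q := h3.ne
  set z := x * Equiv.swap p q with hz
  have hzxp : z (x p) = p := by
    rw [hz, Equiv.Perm.mul_apply, Equiv.swap_apply_of_ne_of_ne hpxp.symm hqxp.symm, hxx]
  have hzxq : z (x q) = q := by
    rw [hz, Equiv.Perm.mul_apply, Equiv.swap_apply_of_ne_of_ne hpxq.symm hqxq.symm, hxx]
  have hyz : y = z * Equiv.swap (x p) (x q) := by
    ext k
    rw [Equiv.Perm.mul_apply]
    by_cases hk1 : k = p
    · subst hk1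
      rw [Equiv.swap_apply_of_ne_of_ne hpxp hpxq, hz, Equiv.Perm.mul_apply,
        Equiv.swap_apply_left, hy1]
    · by_cases hk2 : k = q
      · subst hk2
        rw [Equiv.swap_apply_of_ne_of_ne hqxp hqxq, hz, Equiv.Perm.mul_apply,
          Equiv.swap_apply_right, hy3]
      · by_cases hk3 : k = x p
        · subst hk3
          rw [Equiv.swap_apply_left, hzxq, hy4]
        · by_cases hk4 : k = x q
          · subst hk4
            rw [Equiv.swap_apply_right, hzxp, hy2]
          · rw [Equiv.swap_apply_of_ne_of_ne hk3 hk4, hz, Equiv.Perm.mul_apply,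
              Equiv.swap_apply_of_ne_of_ne hk1 hk2, hy5 k hk1 hk2 hk3 hk4]
  constructor
  · have step1 : invCount x < invCount z := invCount_lt_mul_swap x p q h1 h3
    have step2 : invCount z < invCount y := by
      rw [hyz]
      have := invCount_lt_mul_swap z (x p) (x q) h3 (by rw [hzxp, hzxq]; exact h1)
      exact this
    exact Relation.ReflTransGen.head ⟨⟨p, q, hpq, hz⟩, step1⟩
      (Relation.ReflTransGen.single ⟨⟨x p, x q, hxpxq, hyz⟩, step2⟩)
  · intro h
    rw [← h] at hy1
    exact hxpxq hy1
end
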